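/- Let ρ, Z : ℝ × ℝ³ → ℝ, r¹, r² : ℝ × ℝ³ → ℝ be continuously differentiable, u : ℝ × ℝ³ → ℝ³ continuously differentiable, λ > 0 a constant, and assume ρ ≥ 0 everywhere. If at every point ∂_t ρ + u·∇_x ρ + ρ div_x u = r¹ and ∂_t Z + u·∇_x Z + Z div_x u = r², then at every point ∂_t( (Z+λ)/(ρ+λ) ) + div_x( ((Z+λ)/(ρ+λ)) u ) − [ (Z+λ)ρ/(ρ+λ)² + λ/(ρ+λ) ] div_x u = − r¹ (Z+λ)/(ρ+λ)² + r²/(ρ+λ). -/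

import Mathlib

open RealInnerProductSpace

/-- Three-dimensional Euclidean space. -/
abbrev E3 : Type := EuclideanSpace ℝ (Fin 3)

/-- Divergence of a vector field on `ℝ³`. -/
noncomputable def div3 (V : E3 → E3) (x : E3) : ℝ :=
  ∑ i : Fin 3, ⟪fderiv ℝ V x (EuclideanSpace.single i 1), EuclideanSpace.single i 1⟫

/-! Write `D = ∂_t + u·∇` for the transport derivative; it is the space-time derivative in
the direction `(1, u)`, so it obeys the quotient rule. The hypotheses say
`D(ρ+λ) = r¹ - ρ div u` and `D(Z+λ) = r² - Z div u`, and `div(f u) = u·∇f + f div u`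
turns the left-hand side into `D f + f div u - [⋯] div u` for `f = (Z+λ)/(ρ+λ)`.
What remains is algebra, using `(Z+λ) - Z = λ`. -/

section

variable {𝕜 E F G : Type*} [NontriviallyNormedField 𝕜]
  [NormedAddCommGroup E] [NormedSpace 𝕜 E] [NormedAddCommGroup F] [NormedSpace 𝕜 F]
  [NormedAddCommGroup G] [NormedSpace 𝕜 G]

theorem DifferentiableAt.uncurry_right {g : E → F → G} {t : E} {x : F}
    (h : DifferentiableAt 𝕜 (fun p : E × F => g p.1 p.2) (t, x)) :
    DifferentiableAt 𝕜 (g t) x :=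
  h.comp x (hasFDerivAt_prodMk_right t x).differentiableAt

theorem fderiv_fun_div_apply {f g : E → 𝕜} {p : E} (hf : DifferentiableAt 𝕜 f p)
    (hg : DifferentiableAt 𝕜 g p) (hp : g p ≠ 0) (w : E) :
    fderiv 𝕜 (fun y => f y / g y) p w
      = (fderiv 𝕜 f p w * g p - f p * fderiv 𝕜 g p w) / g p ^ 2 := by
  have along_line {h : E → 𝕜} (hh : DifferentiableAt 𝕜 h p) :
      HasDerivAt (fun τ : 𝕜 => h (p + τ • w)) (fderiv 𝕜 h p w) 0 := by
    have hline : HasDerivAt (fun τ : 𝕜 => p + τ • w) w 0 :=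
      ((hasDerivAt_id (0 : 𝕜)).smul_const w).const_add p |>.congr_deriv (one_smul 𝕜 w)
    exact hh.hasFDerivAt.comp_hasDerivAt_of_eq 0 hline (by simp)
  have hquot := (along_line hf).div (along_line hg) (by simpa using hp)
  simp only [zero_smul, add_zero] at hquot
  exact (along_line (by fun_prop (disch := exact hp))).unique hquot

end

theorem deriv_add_inner_gradient_eq_fderiv {E : Type*} [NormedAddCommGroup E]
    [InnerProductSpace ℝ E] [CompleteSpace E] {g : ℝ → E → ℝ} {t : ℝ} {x : E}
    (hg : DifferentiableAt ℝ (fun p : ℝ × E => g p.1 p.2) (t, x)) (v : E) :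
    deriv (fun s => g s x) t + ⟪v, gradient (g t) x⟫
      = fderiv ℝ (fun p : ℝ × E => g p.1 p.2) (t, x) (1, v) := by
  have htime := hg.hasFDerivAt.comp t (hasFDerivAt_prodMk_left (𝕜 := ℝ) t x)
  have hspace := hg.hasFDerivAt.comp x (hasFDerivAt_prodMk_right (𝕜 := ℝ) t x)
  rw [inner_gradient_right, conj_trivial, show deriv (fun s => g s x) t = _ from
    htime.hasDerivAt.deriv, show fderiv ℝ (g t) x = _ from hspace.fderiv]
  simp [← map_add]

theorem div3_smul {f : E3 → ℝ} {V : E3 → E3} {x : E3} (hf : DifferentiableAt ℝ f x)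
    (hV : DifferentiableAt ℝ V x) :
    div3 (fun y => f y • V y) x = ⟪V x, gradient f x⟫ + f x * div3 V x := by
  have hgradient : ⟪V x, gradient f x⟫
      = ∑ i : Fin 3,
          fderiv ℝ f x (EuclideanSpace.single i 1) * ⟪V x, EuclideanSpace.single i 1⟫ := by
    rw [← (EuclideanSpace.basisFun (Fin 3) ℝ).sum_inner_mul_inner]
    simp only [EuclideanSpace.basisFun_apply, inner_gradient_right, conj_trivial, mul_comm]
  simp only [div3, fderiv_fun_smul hf hV, add_apply, smul_apply,
    ContinuousLinearMap.smulRight_apply, inner_add_left, real_inner_smul_left,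
    Finset.sum_add_distrib, ← Finset.mul_sum, hgradient]
  ring

theorem shifted_ratio_identity_general
    (ρ Z r1 r2 : ℝ → E3 → ℝ) (u : ℝ → E3 → E3) (lam : ℝ) (hlam : 0 < lam)
    (hρ : ContDiff ℝ 1 (fun p : ℝ × E3 => ρ p.1 p.2))
    (hZ : ContDiff ℝ 1 (fun p : ℝ × E3 => Z p.1 p.2))
    (hu : ContDiff ℝ 1 (fun p : ℝ × E3 => u p.1 p.2))
    (hρnonneg : ∀ t x, 0 ≤ ρ t x)
    (heq1 : ∀ t x, deriv (fun s => ρ s x) t + ⟪u t x, gradient (ρ t) x⟫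
      + ρ t x * div3 (u t) x = r1 t x)
    (heq2 : ∀ t x, deriv (fun s => Z s x) t + ⟪u t x, gradient (Z t) x⟫
      + Z t x * div3 (u t) x = r2 t x) :
    ∀ t x,
      deriv (fun s => (Z s x + lam) / (ρ s x + lam)) t
        + div3 (fun y => ((Z t y + lam) / (ρ t y + lam)) • u t y) x
        - ((Z t x + lam) * ρ t x / (ρ t x + lam) ^ 2 + lam / (ρ t x + lam))
            * div3 (u t) x
      = -(r1 t x) * (Z t x + lam) / (ρ t x + lam) ^ 2 + r2 t x / (ρ t x + lam) := by
  intro t x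
  have hden : ρ t x + lam ≠ 0 := by linarith [hρnonneg t x]
  have hρ_diff := hρ.differentiable one_ne_zero (t, x)
  have hZ_diff := hZ.differentiable one_ne_zero (t, x)
  have hq_diff : DifferentiableAt ℝ
      (fun p : ℝ × E3 => (Z p.1 p.2 + lam) / (ρ p.1 p.2 + lam)) (t, x) := by
    fun_prop (disch := exact hden)
  have hρ_transport : fderiv ℝ (fun p : ℝ × E3 => ρ p.1 p.2 + lam) (t, x) (1, u t x)
      = r1 t x - ρ t x * div3 (u t) x := by
    rw [fderiv_add_const, ← deriv_add_inner_gradient_eq_fderiv hρ_diff]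
    linarith [heq1 t x]
  have hZ_transport : fderiv ℝ (fun p : ℝ × E3 => Z p.1 p.2 + lam) (t, x) (1, u t x)
      = r2 t x - Z t x * div3 (u t) x := by
    rw [fderiv_add_const, ← deriv_add_inner_gradient_eq_fderiv hZ_diff]
    linarith [heq2 t x]
  rw [div3_smul (hq_diff.uncurry_right (g := fun s y => (Z s y + lam) / (ρ s y + lam)))
      (hu.differentiable one_ne_zero (t, x)).uncurry_right, ← add_assoc,
    deriv_add_inner_gradient_eq_fderiv (g := fun s y => (Z s y + lam) / (ρ s y + lam)) hq_diff,
    fderiv_fun_div_apply (hZ_diff.add_const lam) (hρ_diff.add_const lam) hden,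
    hZ_transport, hρ_transport]
  field_simp
  ring

/-- Key algebraic identity of the DiPerna–Lions regularization argument: if
`∂_tρ + u·∇ρ + ρ div u = r¹` and `∂_tZ + u·∇Z + Z div u = r²`, then the shifted ratio
`(Z+λ)/(ρ+λ)`, `λ > 0`, satisfies
`∂_t((Z+λ)/(ρ+λ)) + div(((Z+λ)/(ρ+λ))u) − [(Z+λ)ρ/(ρ+λ)² + λ/(ρ+λ)] div u
  = −r¹(Z+λ)/(ρ+λ)² + r²/(ρ+λ)`. -/
theorem shifted_ratio_identity
    (ρ Z r1 r2 : ℝ → E3 → ℝ) (u : ℝ → E3 → E3) (lam : ℝ) (hlam : 0 < lam)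
    (hρ : ContDiff ℝ 1 (fun p : ℝ × E3 => ρ p.1 p.2))
    (hZ : ContDiff ℝ 1 (fun p : ℝ × E3 => Z p.1 p.2))
    (hr1 : ContDiff ℝ 1 (fun p : ℝ × E3 => r1 p.1 p.2))
    (hr2 : ContDiff ℝ 1 (fun p : ℝ × E3 => r2 p.1 p.2))
    (hu : ContDiff ℝ 1 (fun p : ℝ × E3 => u p.1 p.2))
    (hρnonneg : ∀ t x, 0 ≤ ρ t x)
    (heq1 : ∀ t x, deriv (fun s => ρ s x) t + ⟪u t x, gradient (ρ t) x⟫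
      + ρ t x * div3 (u t) x = r1 t x)
    (heq2 : ∀ t x, deriv (fun s => Z s x) t + ⟪u t x, gradient (Z t) x⟫
      + Z t x * div3 (u t) x = r2 t x) :
    ∀ t x,
      deriv (fun s => (Z s x + lam) / (ρ s x + lam)) t
        + div3 (fun y => ((Z t y + lam) / (ρ t y + lam)) • u t y) x
        - ((Z t x + lam) * ρ t x / (ρ t x + lam) ^ 2 + lam / (ρ t x + lam))
            * div3 (u t) x
      = -(r1 t x) * (Z t x + lam) / (ρ t x + lam) ^ 2 + r2 t x / (ρ t x + lam) :=
  shifted_ratio_identity_general ρ Z r1 r2 u lam hlam hρ hZ hu hρnonneg heq1 heq2
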